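/- arXiv:1906.10798 — 5 statements merged into one kernel-verified Lean document; each statement's English description precedes it below -/
import Mathlib

section
/- Let P be a finite poset with order ≼, f: P → P' a surjective function, and define the relation ≼' on P' by b' ≼' a' iff there exist a ∈ f⁻¹(a'), b ∈ f⁻¹(b') with b ≼ a. If (i) whenever b' ≼' a', for every a ∈ f⁻¹(a') there exists b ∈ f⁻¹(b') with b ≼ a, and (ii) whenever c ≼ b ≼ a in P and f(c) = f(a), then f(b) = f(a), then ≼' is a partial order on P'. -/
/-- If `P` is a finite poset, `f : P → P'` surjective, and `r'` is the
image relation (`b' ≼' a'` iff there are preimages `b ≼ a`), then under the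
density-down condition and the interpolation condition, `r'` is a partial order. -/
theorem induced_relation_isPartialOrder
    {P P' : Type*} [Fintype P] [PartialOrder P]
    (f : P → P') (hf : Function.Surjective f)
    (r' : P' → P' → Prop)
    (hr' : ∀ b' a' : P', r' b' a' ↔ ∃ a b : P, f a = a' ∧ f b = b' ∧ b ≤ a)
    (hdens : ∀ b' a' : P', r' b' a' → ∀ a : P, f a = a' → ∃ b : P, f b = b' ∧ b ≤ a)
    (hsol : ∀ a b c : P, c ≤ b → b ≤ a → f c = f a → f b = f a) :
    IsPartialOrder P' r' := by
  refine { refl := ?_, trans := ?_, antisymm := ?_ }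
  · intro a'
    obtain ⟨a, ha⟩ := hf a'
    exact (hr' a' a').mpr ⟨a, a, ha, ha, le_refl a⟩
  · intro c' b' a' hcb hba
    obtain ⟨a, b, ha, hb, hle⟩ := (hr' b' a').mp hba
    obtain ⟨c, hc, hcb'⟩ := hdens c' b' hcb b hb
    exact (hr' c' a').mpr ⟨a, c, ha, hc, hcb'.trans hle⟩
  · intro a' b' hab hba
    obtain ⟨a, ha⟩ := hf b'
    obtain ⟨b, hb, hba'⟩ := hdens a' b' hab a ha
    obtain ⟨c, hc, hcb⟩ := hdens b' a' hba b hb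
    rw [← hb, hsol a b c hcb hba' (hc.trans ha.symm), ha]
end

section
/- Let P be a finite poset, f: P → P' surjective satisfying the coarsening conditions. Then the elementwise image map g sends the set of nonempty down-sets of P onto the set of nonempty down-sets of P': g(𝒪↓(P)∖{∅}) = 𝒪↓(P')∖{∅}. -/
/-- Under the coarsening conditions (with `P` having a bottom element),
the elementwise image map `g(A) = f '' A` sends the set of nonempty down-sets of `P`
onto the set of nonempty down-sets of `P'` (w.r.t. the induced relation `r'`). -/
theorem image_of_lowerSets_eq
    {P P' : Type*} [Fintype P] [PartialOrder P] [OrderBot P]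
    (f : P → P') (hf : Function.Surjective f)
    (r' : P' → P' → Prop)
    (hr' : ∀ b' a' : P', r' b' a' ↔ ∃ a b : P, f a = a' ∧ f b = b' ∧ b ≤ a)
    (hdens : ∀ b' a' : P', r' b' a' → ∀ a : P, f a = a' → ∃ b : P, f b = b' ∧ b ≤ a)
    (hsol : ∀ a b c : P, c ≤ b → b ≤ a → f c = f a → f b = f a) :
    (fun A : Set P => f '' A) '' {A : Set P | A.Nonempty ∧ IsLowerSet A}
      = {A' : Set P' | A'.Nonempty ∧ ∀ a' ∈ A', ∀ b' : P', r' b' a' → b' ∈ A'} := by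
  ext A'
  constructor
  · rintro ⟨A, ⟨⟨x, hx⟩, hlow⟩, rfl⟩
    refine ⟨⟨f x, ⟨x, hx, rfl⟩⟩, ?_⟩
    rintro a' ⟨a, ha, rfl⟩ b' hb'
    obtain ⟨b, hfb, hba⟩ := hdens b' (f a) hb' a rfl
    exact ⟨b, hlow hba ha, hfb⟩
  · rintro ⟨⟨x', hx'⟩, hlow⟩
    refine ⟨f ⁻¹' A', ⟨?_, ?_⟩, ?_⟩
    · obtain ⟨x, rfl⟩ := hf x'
      exact ⟨x, hx'⟩
    · intro a b hba ha
      exact hlow (f a) ha (f b) ((hr' (f b) (f a)).2 ⟨a, b, rfl, rfl, hba⟩)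
    · exact Set.image_preimage_eq A' hf
end

section
/- Let P be a finite poset with bottom, f: P → P' surjective satisfying the coarsening conditions, Q and Q' the lattices of nonempty down-sets of P and P' ordered by inclusion, and g the elementwise action of f. For nonempty down-sets A', B' of P', B' ⊆ A' if and only if there exist nonempty down-sets B ∈ g⁻¹(B'), A ∈ g⁻¹(A') of P with B ⊆ A. -/
/-! Pulling back along the surjection `f` gives the forward direction: the preimages of `B'` and
`A'` are nonempty down-sets, since `f` carries `≤` into the induced relation, they map onto `B'`
and `A'`, and preimage is monotone. The converse is monotonicity of the image. -/

theorem isLowerSet_preimage_of_forall_rel_mem {P P' : Type*} [Preorder P] {f : P → P'}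
    {r : P' → P' → Prop} (hr : ∀ ⦃a b : P⦄, b ≤ a → r (f b) (f a)) {S : Set P'}
    (hS : ∀ a' ∈ S, ∀ b' : P', r b' a' → b' ∈ S) : IsLowerSet (f ⁻¹' S) :=
  fun _ _ hba ha => hS _ ha _ (hr hba)

theorem induced_relation_on_downsets_is_inclusion_general
    {P P' : Type*} [PartialOrder P]
    (f : P → P') (hf : Function.Surjective f)
    (r' : P' → P' → Prop)
    (hr' : ∀ b' a' : P', r' b' a' ↔ ∃ a b : P, f a = a' ∧ f b = b' ∧ b ≤ a)
    (A' B' : Set P')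
    (hA'ne : A'.Nonempty) (hA'down : ∀ a' ∈ A', ∀ b' : P', r' b' a' → b' ∈ A')
    (hB'ne : B'.Nonempty) (hB'down : ∀ a' ∈ B', ∀ b' : P', r' b' a' → b' ∈ B') :
    B' ⊆ A' ↔
      ∃ B A : Set P, B.Nonempty ∧ IsLowerSet B ∧ f '' B = B' ∧
        A.Nonempty ∧ IsLowerSet A ∧ f '' A = A' ∧ B ⊆ A := by
  have hr : ∀ ⦃a b : P⦄, b ≤ a → r' (f b) (f a) := fun a b hba =>
    (hr' _ _).2 ⟨a, b, rfl, rfl, hba⟩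
  constructor
  · intro hBA'
    exact ⟨f ⁻¹' B', f ⁻¹' A', hB'ne.preimage hf,
      isLowerSet_preimage_of_forall_rel_mem hr hB'down, Set.image_preimage_eq _ hf,
      hA'ne.preimage hf, isLowerSet_preimage_of_forall_rel_mem hr hA'down,
      Set.image_preimage_eq _ hf, Set.preimage_mono hBA'⟩
  · rintro ⟨B, A, -, -, rfl, -, -, rfl, hBA⟩
    exact Set.image_mono hBA

/-- For nonempty down-sets `A'`, `B'` of `P'`, inclusion `B' ⊆ A'` holds
iff there exist nonempty down-sets `B`, `A` of `P` with `f '' B = B'`, `f '' A = A'`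
and `B ⊆ A`; i.e., the relation on down-sets induced by the elementwise image map
coincides with inclusion. -/
theorem induced_relation_on_downsets_is_inclusion
    {P P' : Type*} [Fintype P] [PartialOrder P] [OrderBot P]
    (f : P → P') (hf : Function.Surjective f)
    (r' : P' → P' → Prop)
    (hr' : ∀ b' a' : P', r' b' a' ↔ ∃ a b : P, f a = a' ∧ f b = b' ∧ b ≤ a)
    (hdens : ∀ b' a' : P', r' b' a' → ∀ a : P, f a = a' → ∃ b : P, f b = b' ∧ b ≤ a)
    (hsol : ∀ a b c : P, c ≤ b → b ≤ a → f c = f a → f b = f a)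
    (A' B' : Set P')
    (hA'ne : A'.Nonempty) (hA'down : ∀ a' ∈ A', ∀ b' : P', r' b' a' → b' ∈ A')
    (hB'ne : B'.Nonempty) (hB'down : ∀ a' ∈ B', ∀ b' : P', r' b' a' → b' ∈ B') :
    B' ⊆ A' ↔
      ∃ B A : Set P, B.Nonempty ∧ IsLowerSet B ∧ f '' B = B' ∧
        A.Nonempty ∧ IsLowerSet A ∧ f '' A = A' ∧ B ⊆ A :=
  induced_relation_on_downsets_is_inclusion_general f hf r' hr' A' B' hA'ne hA'down hB'ne hB'down
end

section
/- Let P be a finite poset, f: P → P' surjective satisfying the coarsening conditions, g the elementwise action of f on down-sets, and define g'(A') = ⋁ g⁻¹(A') (union of all nonempty down-sets of P whose image under g is A'). Then for every nonempty down-set A' of P': g'(A') = {a ∈ P : f(a) ∈ A'} = ⋃_{a'∈A'} f⁻¹(a'), and g(g'(A')) = A'. -/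
/-- Define `g'(A')` as the union (join) of all nonempty down-sets of `P`
whose elementwise image under `f` is `A'`. Then for every nonempty down-set `A'` of
`P'`: `g'(A') = {a | f a ∈ A'} = ⋃_{a' ∈ A'} f⁻¹(a')`, and `f '' g'(A') = A'`. -/
theorem join_of_fiber_downsets
    {P P' : Type*} [Fintype P] [PartialOrder P]
    (f : P → P') (hf : Function.Surjective f)
    (r' : P' → P' → Prop)
    (hr' : ∀ b' a' : P', r' b' a' ↔ ∃ a b : P, f a = a' ∧ f b = b' ∧ b ≤ a)
    (hdensd : ∀ b' a' : P', r' b' a' → ∀ a : P, f a = a' → ∃ b : P, f b = b' ∧ b ≤ a)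
    (hdensu : ∀ b' a' : P', r' b' a' → ∀ b : P, f b = b' → ∃ a : P, f a = a' ∧ b ≤ a)
    (hsol : ∀ a b c : P, c ≤ b → b ≤ a → f c = f a → f b = f a)
    (A' : Set P') (hA'ne : A'.Nonempty)
    (hA'down : ∀ a' ∈ A', ∀ b' : P', r' b' a' → b' ∈ A') :
    ⋃₀ {A : Set P | A.Nonempty ∧ IsLowerSet A ∧ f '' A = A'} = {a : P | f a ∈ A'} ∧
    ⋃₀ {A : Set P | A.Nonempty ∧ IsLowerSet A ∧ f '' A = A'} = ⋃ a' ∈ A', f ⁻¹' {a'} ∧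
    f '' (⋃₀ {A : Set P | A.Nonempty ∧ IsLowerSet A ∧ f '' A = A'}) = A' := by
  set S : Set P := {a : P | f a ∈ A'} with hS
  -- S is a member of the family
  have hSne : S.Nonempty := by
    obtain ⟨a', ha'⟩ := hA'ne
    obtain ⟨a, ha⟩ := hf a'
    exact ⟨a, by simp [hS, ha, ha']⟩
  have hSlow : IsLowerSet S := by
    intro a b hba ha
    have : r' (f b) (f a) := (hr' (f b) (f a)).mpr ⟨a, b, rfl, rfl, hba⟩
    exact hA'down (f a) ha (f b) this
  have hSimg : f '' S = A' := by
    apply Set.Subset.antisymm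
    · rintro _ ⟨a, ha, rfl⟩; exact ha
    · intro a' ha'
      obtain ⟨a, ha⟩ := hf a'
      exact ⟨a, by simp [hS, ha, ha'], ha⟩
  have hmem : S ∈ {A : Set P | A.Nonempty ∧ IsLowerSet A ∧ f '' A = A'} :=
    ⟨hSne, hSlow, hSimg⟩
  have hUnion : ⋃₀ {A : Set P | A.Nonempty ∧ IsLowerSet A ∧ f '' A = A'} = S := by
    apply Set.Subset.antisymm
    · rintro a ⟨A, ⟨hAne, hAlow, hAimg⟩, haA⟩
      show f a ∈ A'
      rw [← hAimg]; exact ⟨a, haA, rfl⟩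
    · exact Set.subset_sUnion_of_mem hmem
  refine ⟨hUnion, ?_⟩
  rw [hUnion]
  constructor
  · ext a; simp [hS]
  · exact hSimg
end

section
/- For each integer −(n−1) ≤ k ≤ n−1, the set of k-stretchable integer partitions of n, i.e., those ξ̄ with rank r(ξ̄) = w(ξ̄) − h(ξ̄) ≤ k, is a down-set in the refinement order on integer partitions of n. -/
open Finset in
/-- The type of a set partition of `Fin n`: the multiset of its block sizes. -/
def ptype {n : ℕ} (ξ : Finpartition (univ : Finset (Fin n))) : Multiset ℕ :=
  ξ.parts.val.map Finset.card

open Finset in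
/-- Refinement of set partitions: every block of `υ` is contained in a block of `ξ`. -/
def srefines {n : ℕ} (υ ξ : Finpartition (univ : Finset (Fin n))) : Prop :=
  ∀ Y ∈ υ.parts, ∃ X ∈ ξ.parts, Y ⊆ X

open Finset in
/-- Refinement relation on integer partitions of `n`, via set-partition representatives. -/
def irefines {n : ℕ} (υb ξb : n.Partition) : Prop :=
  ∃ υ ξ : Finpartition (univ : Finset (Fin n)),
    ptype υ = υb.parts ∧ ptype ξ = ξb.parts ∧ srefines υ ξ

/-- Height: number of parts. -/
def pheight {n : ℕ} (ξb : n.Partition) : ℕ := Multiset.card ξb.parts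

/-- Width: largest part. -/
def pwidth {n : ℕ} (ξb : n.Partition) : ℕ := ξb.parts.sup

/-- Rank: width minus height. -/
def prank {n : ℕ} (ξb : n.Partition) : ℤ := (pwidth ξb : ℤ) - (pheight ξb : ℤ)

/-- Conjugate of a multiset of part sizes: the `i`-th part is the number of parts `≥ i`. -/
def conjParts (p : Multiset ℕ) : Multiset ℕ :=
  (Multiset.range p.sup).map (fun i => Multiset.card (p.filter (fun x => i + 1 ≤ x)))
/-- For `−(n−1) ≤ k ≤ n−1`, the set of `k`-stretchable integer
partitions of `n` (those with rank `≤ k`) is a down-set in the refinement order. -/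
theorem stretchable_downset {n : ℕ} (k : ℤ)
    (hk1 : -((n : ℤ) - 1) ≤ k) (hk2 : k ≤ (n : ℤ) - 1) :
    ∀ ξb : n.Partition, prank ξb ≤ k →
      ∀ υb : n.Partition, irefines υb ξb → prank υb ≤ k := by
  rintro ξb hξb υb ⟨υ, ξ, hυ, hξ, href⟩
  refine le_trans ?_ hξb
  unfold prank pwidth pheight
  rw [← hυ, ← hξ]
  unfold ptype
  have hw : (υ.parts.val.map Finset.card).sup ≤ (ξ.parts.val.map Finset.card).sup := by
    apply Multiset.sup_le.mpr
    intro b hb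
    obtain ⟨Y, hY, rfl⟩ := Multiset.mem_map.mp hb
    obtain ⟨X, hX, hYX⟩ := href Y hY
    exact le_trans (Finset.card_le_card hYX)
      (Multiset.le_sup (Multiset.mem_map_of_mem _ hX))
  have hh : Multiset.card (ξ.parts.val.map Finset.card) ≤
      Multiset.card (υ.parts.val.map Finset.card) := by
    simp only [Multiset.card_map]
    classical
    have hsurj : Set.SurjOn
        (fun Y : Finset (Fin n) =>
          if h : ∃ X ∈ ξ.parts, Y ⊆ X then h.choose else ∅)
        ↑υ.parts ↑ξ.parts := by
      intro X hX
      simp only [Finset.mem_coe] at hX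
      obtain ⟨a, ha⟩ := ξ.nonempty_of_mem_parts hX
      obtain ⟨Y, hY, haY⟩ := υ.exists_mem (Finset.mem_univ a)
      refine ⟨Y, hY, ?_⟩
      have h : ∃ X' ∈ ξ.parts, Y ⊆ X' := href Y hY
      simp only [dif_pos h]
      obtain ⟨hX', hYX'⟩ := h.choose_spec
      exact ξ.eq_of_mem_parts hX' hX (hYX' haY) ha
    exact Finset.card_le_card_of_surjOn _ hsurj
  have := Int.ofNat_le.mpr hw
  have := Int.ofNat_le.mpr hh
  omega
end
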